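/- arXiv:1303.3993 — 2 statements merged into one kernel-verified Lean document; each statement's English description precedes it below -/
import Mathlib

section
/- Let f : ℤ → ℝ be nonnegative with bounded variation, let L be a positive even integer, let [x,y] be an interval of length L, and let 𝕡 = {p < r < q} be a single essential peak for f with x ≤ r ≤ y and 32L < ω(r) ≤ 64L. Then there exist integers s < u < v < t such that x − 64L ≤ s, t ≤ y + 64L, u − s ≥ 4L, v − u = L, t − v ≥ 4L, and min{f(s), f(t)} − A_{u,v}f ≥ (1/4)·Var 𝕡. -/
open Finset

noncomputable section

/-- Average of `f : ℤ → ℝ` over the integer interval `[x, y]`: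
`A_{x,y} f = (1/(y-x+1)) ∑_{k=x}^{y} f(k)`. -/
def avg (f : ℤ → ℝ) (x y : ℤ) : ℝ :=
  (∑ k ∈ Finset.Icc x y, f k) / ((y - x + 1 : ℤ) : ℝ)

/-- The discrete centered Hardy–Littlewood maximal function
`Mf(n) = sup_{r ≥ 0} (1/(2r+1)) ∑_{k=-r}^{r} |f(n+k)|`. -/
def dM (f : ℤ → ℝ) (n : ℤ) : ℝ :=
  ⨆ r : ℕ, avg (fun k => |f k|) (n - r) (n + r)

/-- The total variation `Var f = ∑_{k ∈ ℤ} |f(k+1) - f(k)|`. -/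
def dVar (f : ℤ → ℝ) : ℝ := ∑' k : ℤ, |f (k + 1) - f k|

/-- `f` has bounded variation. -/
def BddVar (f : ℤ → ℝ) : Prop := Summable fun k : ℤ => |f (k + 1) - f k|

/-- A peak for `f`: integers `p < r < q` with `Mf(p) < Mf(r)` and `Mf(q) < Mf(r)`. -/
def IsPeak (f : ℤ → ℝ) (p r q : ℤ) : Prop :=
  p < r ∧ r < q ∧ dM f p < dM f r ∧ dM f q < dM f r

/-- The variation of a peak `{p < r < q}`: `2·Mf(r) - Mf(p) - Mf(q)`. -/
def peakVar (f : ℤ → ℝ) (p r q : ℤ) : ℝ := 2 * dM f r - dM f p - dM f q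

/-- An essential peak: `max_{p<k<q} f(k) ≤ Mf(r) - (1/4)·Var{p,r,q}`. -/
def IsEssentialPeak (f : ℤ → ℝ) (p r q : ℤ) : Prop :=
  IsPeak f p r q ∧
    ∀ k : ℤ, p < k → k < q → f k ≤ dM f r - (1 / 4) * peakVar f p r q

/-- `w` is the radius `ω(r)` of an (essential) peak with center `r`:
the largest integer `w > 0` with `A_w f(r) = Mf(r)`. -/
def IsRadius (f : ℤ → ℝ) (r w : ℤ) : Prop :=
  0 < w ∧ avg f (r - w) (r + w) = dM f r ∧
    ∀ w' : ℤ, 0 < w' → avg f (r - w') (r + w') = dM f r → w' ≤ w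

lemma card_Icc_real (a b : ℤ) (hab : a ≤ b) :
    ((Finset.Icc a b).card : ℝ) = ((b - a + 1 : ℤ) : ℝ) := by
  rw [Int.card_Icc]
  have h0 : (0:ℤ) ≤ b + 1 - a := by omega
  have h1 : (((b + 1 - a).toNat : ℤ) : ℝ) = ((b - a + 1 : ℤ) : ℝ) := by
    rw [Int.toNat_of_nonneg h0]; push_cast; ring
  exact_mod_cast h1

lemma sum_Icc_le (f : ℤ → ℝ) (a b : ℤ) (c : ℝ) (hab : a ≤ b)
    (h : ∀ k ∈ Finset.Icc a b, f k ≤ c) :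
    ∑ k ∈ Finset.Icc a b, f k ≤ ((b - a + 1 : ℤ) : ℝ) * c := by
  calc ∑ k ∈ Finset.Icc a b, f k ≤ ∑ _k ∈ Finset.Icc a b, c := Finset.sum_le_sum h
    _ = ((Finset.Icc a b).card : ℝ) * c := by rw [Finset.sum_const, nsmul_eq_mul]
    _ = _ := by rw [card_Icc_real a b hab]

lemma avg_le_of_le (f : ℤ → ℝ) (a b : ℤ) (c : ℝ) (hab : a ≤ b)
    (h : ∀ k ∈ Finset.Icc a b, f k ≤ c) : avg f a b ≤ c := by
  have hpos : (0:ℝ) < ((b - a + 1 : ℤ) : ℝ) := by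
    exact_mod_cast (by omega : (0:ℤ) < b - a + 1)
  rw [avg, div_le_iff₀ hpos, mul_comm]
  exact sum_Icc_le f a b c hab h

lemma sum_eq_of_avg (f : ℤ → ℝ) (a b : ℤ) (c : ℝ) (hab : a ≤ b) (h : avg f a b = c) :
    ∑ k ∈ Finset.Icc a b, f k = ((b - a + 1 : ℤ) : ℝ) * c := by
  have hne : ((b - a + 1 : ℤ) : ℝ) ≠ 0 := by
    have : (0:ℝ) < ((b - a + 1 : ℤ) : ℝ) := by exact_mod_cast (by omega : (0:ℤ) < b - a + 1)
    linarith
  rw [avg, div_eq_iff hne] at h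
  rw [h]; ring

lemma sum_le_of_avg_le (f : ℤ → ℝ) (a b : ℤ) (c : ℝ) (hab : a ≤ b) (h : avg f a b ≤ c) :
    ∑ k ∈ Finset.Icc a b, f k ≤ ((b - a + 1 : ℤ) : ℝ) * c := by
  have hpos : (0:ℝ) < ((b - a + 1 : ℤ) : ℝ) := by
    exact_mod_cast (by omega : (0:ℤ) < b - a + 1)
  rw [avg, div_le_iff₀ hpos] at h
  linarith [h]

lemma exists_ge_of_sum (f : ℤ → ℝ) (a b : ℤ) (c : ℝ) (hab : a ≤ b)
    (h : ((b - a + 1 : ℤ) : ℝ) * c ≤ ∑ k ∈ Finset.Icc a b, f k) :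
    ∃ s, a ≤ s ∧ s ≤ b ∧ c ≤ f s := by
  have hne : (Finset.Icc a b).Nonempty := Finset.nonempty_Icc.2 hab
  have hsum : ∑ _k ∈ Finset.Icc a b, c ≤ ∑ k ∈ Finset.Icc a b, f k := by
    rw [Finset.sum_const, nsmul_eq_mul, card_Icc_real a b hab]; exact h
  obtain ⟨s, hs, hcs⟩ := Finset.exists_le_of_sum_le hne hsum
  exact ⟨s, (Finset.mem_Icc.1 hs).1, (Finset.mem_Icc.1 hs).2, hcs⟩

lemma sum_Icc_split (f : ℤ → ℝ) (a m b : ℤ) (h1 : a - 1 ≤ m) (h2 : m ≤ b) :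
    ∑ k ∈ Finset.Icc a b, f k
      = (∑ k ∈ Finset.Icc a m, f k) + ∑ k ∈ Finset.Icc (m+1) b, f k := by
  rw [← Finset.sum_union (by simp only [Finset.disjoint_left, Finset.mem_Icc]; omega)]
  congr 1
  ext k
  simp only [Finset.mem_union, Finset.mem_Icc]
  omega

lemma abs_sub_le_dVar (f : ℤ → ℝ) (hbv : BddVar f) (a : ℤ) (n : ℕ) :
    |f (a + n) - f a| ≤ dVar f := by
  have key : ∀ n : ℕ, |f (a + n) - f a| ≤ ∑ j ∈ Finset.range n, |f (a + j + 1) - f (a + j)| := by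
    intro n
    induction n with
    | zero => simp
    | succ n ih =>
      rw [Finset.sum_range_succ]
      have heq : |f (a + ((n:ℕ)+1 : ℕ)) - f a|
          = |(f (a + n + 1) - f (a + n)) + (f (a + n) - f a)| := by
        push_cast
        ring_nf
      have := abs_add_le (f (a + n + 1) - f (a + n)) (f (a + n) - f a)
      rw [heq]
      linarith [ih]
  refine (key n).trans ?_
  have hmap : ∑ j ∈ Finset.range n, |f (a + j + 1) - f (a + j)|
      = ∑ k ∈ (Finset.range n).map ⟨fun j : ℕ => a + (j:ℤ), fun i j h => by simp only at h; omega⟩,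
          |f (k + 1) - f k| := by
    rw [Finset.sum_map]
    rfl
  rw [hmap]
  exact Summable.sum_le_tsum _ (fun k _ => abs_nonneg _) hbv

lemma abs_le_bound (f : ℤ → ℝ) (hbv : BddVar f) (k : ℤ) : |f k| ≤ |f 0| + dVar f := by
  rcases le_or_gt 0 k with h | h
  · have h1 := abs_sub_le_dVar f hbv 0 k.toNat
    rw [show ((0:ℤ) + (k.toNat : ℤ)) = k by omega] at h1
    calc |f k| = |f 0 + (f k - f 0)| := by ring_nf
      _ ≤ |f 0| + |f k - f 0| := abs_add_le _ _
      _ ≤ |f 0| + dVar f := by linarith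
  · have h1 := abs_sub_le_dVar f hbv k (-k).toNat
    rw [show (k + ((-k).toNat : ℤ)) = 0 by omega] at h1
    rw [abs_sub_comm] at h1
    calc |f k| = |f 0 + (f k - f 0)| := by ring_nf
      _ ≤ |f 0| + |f k - f 0| := abs_add_le _ _
      _ ≤ |f 0| + dVar f := by linarith

lemma avg_le_dM (f : ℤ → ℝ) (hf : ∀ n, 0 ≤ f n) (hbv : BddVar f) (n w : ℤ) (hw : 0 ≤ w) :
    avg f (n - w) (n + w) ≤ dM f n := by
  have hb : BddAbove (Set.range fun r : ℕ => avg (fun k => |f k|) (n - r) (n + r)) := by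
    refine ⟨|f 0| + dVar f, ?_⟩
    rintro x ⟨r, rfl⟩
    exact avg_le_of_le _ _ _ _ (by omega) (fun k _ => abs_le_bound f hbv k)
  have h1 : avg (fun k => |f k|) (n - (w.toNat:ℤ)) (n + (w.toNat:ℤ)) ≤ dM f n :=
    le_ciSup hb w.toNat
  rw [Int.toNat_of_nonneg hw] at h1
  calc avg f (n - w) (n + w) = avg (fun k => |f k|) (n - w) (n + w) := by
        unfold avg; congr 1
        exact Finset.sum_congr rfl fun k _ => (abs_of_nonneg (hf k)).symm
    _ ≤ dM f n := h1

lemma exists_left (f : ℤ → ℝ) (hf : ∀ n, 0 ≤ f n) (hbv : BddVar f)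
    (p r q ω : ℤ) (hpk : IsEssentialPeak f p r q) (hrad : IsRadius f r ω) :
    ∃ s, r - ω ≤ s ∧ s ≤ p ∧ (q ≤ r + ω → s ≤ 2*q - r - ω - 1) ∧ dM f r ≤ f s := by
  obtain ⟨⟨hpr, hrq, hMp, hMq⟩, hess⟩ := hpk
  obtain ⟨hω, havg, -⟩ := hrad
  have hVpos : 0 < peakVar f p r q := by unfold peakVar; linarith
  have hIab : r - ω ≤ r + ω := by omega
  have hsumI : ∑ k ∈ Finset.Icc (r-ω) (r+ω), f k = ((2*ω+1 : ℤ):ℝ) * dM f r := by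
    have h1 := sum_eq_of_avg f (r-ω) (r+ω) (dM f r) hIab havg
    rw [show (r + ω - (r - ω) + 1 : ℤ) = 2*ω+1 by ring] at h1
    exact h1
  by_cases hqc : q ≤ r + ω
  · -- prefix of length 2(q-r) has average > M
    have hc1 : r - ω ≤ 2*q - r - ω - 1 := by omega
    have hright : ∑ k ∈ Finset.Icc (2*q - r - ω) (r+ω), f k
        ≤ ((2*(r+ω-q)+1 : ℤ):ℝ) * dM f q := by
      have h := avg_le_dM f hf hbv q (r+ω-q) (by omega)
      have h2 := sum_le_of_avg_le f (q-(r+ω-q)) (q+(r+ω-q)) _ (by omega) h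
      rw [show (q+(r+ω-q) - (q - (r+ω-q)) + 1 : ℤ) = 2*(r+ω-q)+1 by ring] at h2
      rw [show (q+(r+ω-q) : ℤ) = r+ω by ring] at h2
      rwa [show (q-(r+ω-q) : ℤ) = 2*q - r - ω by ring] at h2
    have hsplit := sum_Icc_split f (r-ω) (2*q - r - ω - 1) (r+ω) (by omega) (by omega)
    rw [show (2*q - r - ω - 1 + 1 : ℤ) = 2*q - r - ω by ring] at hsplit
    have hmul : ((2*(r+ω-q)+1 : ℤ):ℝ) * dM f q ≤ ((2*(r+ω-q)+1 : ℤ):ℝ) * dM f r := by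
      apply mul_le_mul_of_nonneg_left (le_of_lt hMq)
      exact_mod_cast (by omega : (0:ℤ) ≤ 2*(r+ω-q)+1)
    have hpre : ((2*q - r - ω - 1 - (r-ω) + 1 : ℤ):ℝ) * dM f r
        ≤ ∑ k ∈ Finset.Icc (r-ω) (2*q - r - ω - 1), f k := by
      have hco : ((2*q - r - ω - 1 - (r-ω) + 1 : ℤ):ℝ)
          = ((2*ω+1 : ℤ):ℝ) - ((2*(r+ω-q)+1 : ℤ):ℝ) := by push_cast; ring
      rw [hco]
      have : ∑ k ∈ Finset.Icc (r-ω) (2*q - r - ω - 1), f k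
          = (∑ k ∈ Finset.Icc (r-ω) (r+ω), f k) - ∑ k ∈ Finset.Icc (2*q - r - ω) (r+ω), f k := by
        linarith [hsplit]
      rw [this, hsumI]
      nlinarith [hright, hmul]
    obtain ⟨s, hs1, hs2, hs3⟩ := exists_ge_of_sum f (r-ω) (2*q - r - ω - 1) (dM f r) hc1 hpre
    have hsp : s ≤ p := by
      by_contra hcon
      push_neg at hcon
      have hsq : s < q := by omega
      have := hess s hcon hsq
      linarith
    exact ⟨s, hs1, hsp, fun _ => hs2, hs3⟩
  · push_neg at hqc
    by_cases hpc : r - ω ≤ p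
    · have hsplit := sum_Icc_split f (r-ω) p (r+ω) (by omega) (by omega)
      have hmid : ∑ k ∈ Finset.Icc (p+1) (r+ω), f k
          ≤ ((r+ω-(p+1)+1 : ℤ):ℝ) * (dM f r - (1/4) * peakVar f p r q) := by
        apply sum_Icc_le f (p+1) (r+ω) _ (by omega)
        intro k hk
        rw [Finset.mem_Icc] at hk
        exact hess k (by omega) (by omega)
      have hmid2 : ∑ k ∈ Finset.Icc (p+1) (r+ω), f k ≤ ((r+ω-(p+1)+1 : ℤ):ℝ) * dM f r := by
        refine hmid.trans ?_
        have hc0 : (0:ℝ) ≤ ((r+ω-(p+1)+1 : ℤ):ℝ) := by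
          exact_mod_cast (by omega : (0:ℤ) ≤ r+ω-(p+1)+1)
        nlinarith
      have hpre : ((p - (r-ω) + 1 : ℤ):ℝ) * dM f r ≤ ∑ k ∈ Finset.Icc (r-ω) p, f k := by
        have hco : ((p - (r-ω) + 1 : ℤ):ℝ) = ((2*ω+1 : ℤ):ℝ) - ((r+ω-(p+1)+1 : ℤ):ℝ) := by
          push_cast; ring
        rw [hco]
        have : ∑ k ∈ Finset.Icc (r-ω) p, f k
            = (∑ k ∈ Finset.Icc (r-ω) (r+ω), f k) - ∑ k ∈ Finset.Icc (p+1) (r+ω), f k := by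
          linarith [hsplit]
        rw [this, hsumI]
        nlinarith [hmid2]
      obtain ⟨s, hs1, hs2, hs3⟩ := exists_ge_of_sum f (r-ω) p (dM f r) hpc hpre
      exact ⟨s, hs1, hs2, fun hcon => absurd hcon (by omega), hs3⟩
    · exfalso
      push_neg at hpc
      have hall : ∑ k ∈ Finset.Icc (r-ω) (r+ω), f k
          ≤ ((r+ω-(r-ω)+1 : ℤ):ℝ) * (dM f r - (1/4) * peakVar f p r q) := by
        apply sum_Icc_le f (r-ω) (r+ω) _ hIab
        intro k hk
        rw [Finset.mem_Icc] at hk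
        exact hess k (by omega) (by omega)
      rw [hsumI, show (r+ω-(r-ω)+1 : ℤ) = 2*ω+1 by ring] at hall
      have hc0 : (0:ℝ) < ((2*ω+1 : ℤ):ℝ) := by
        exact_mod_cast (by omega : (0:ℤ) < 2*ω+1)
      nlinarith

lemma exists_right (f : ℤ → ℝ) (hf : ∀ n, 0 ≤ f n) (hbv : BddVar f)
    (p r q ω : ℤ) (hpk : IsEssentialPeak f p r q) (hrad : IsRadius f r ω) :
    ∃ t, t ≤ r + ω ∧ q ≤ t ∧ (r - ω ≤ p → 2*p - r + ω + 1 ≤ t) ∧ dM f r ≤ f t := by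
  obtain ⟨⟨hpr, hrq, hMp, hMq⟩, hess⟩ := hpk
  obtain ⟨hω, havg, -⟩ := hrad
  have hVpos : 0 < peakVar f p r q := by unfold peakVar; linarith
  have hIab : r - ω ≤ r + ω := by omega
  have hsumI : ∑ k ∈ Finset.Icc (r-ω) (r+ω), f k = ((2*ω+1 : ℤ):ℝ) * dM f r := by
    have h1 := sum_eq_of_avg f (r-ω) (r+ω) (dM f r) hIab havg
    rw [show (r + ω - (r - ω) + 1 : ℤ) = 2*ω+1 by ring] at h1
    exact h1
  by_cases hpc : r - ω ≤ p
  · -- suffix of length 2(r-p) has average > M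
    have hc1 : 2*p - r + ω + 1 ≤ r + ω := by omega
    have hleft : ∑ k ∈ Finset.Icc (r-ω) (2*p - r + ω), f k
        ≤ ((2*(p-r+ω)+1 : ℤ):ℝ) * dM f p := by
      have h := avg_le_dM f hf hbv p (p-r+ω) (by omega)
      have h2 := sum_le_of_avg_le f (p-(p-r+ω)) (p+(p-r+ω)) _ (by omega) h
      rw [show (p+(p-r+ω) - (p - (p-r+ω)) + 1 : ℤ) = 2*(p-r+ω)+1 by ring] at h2
      rw [show (p+(p-r+ω) : ℤ) = 2*p - r + ω by ring] at h2
      rwa [show (p-(p-r+ω) : ℤ) = r-ω by ring] at h2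
    have hsplit := sum_Icc_split f (r-ω) (2*p - r + ω) (r+ω) (by omega) (by omega)
    have hmul : ((2*(p-r+ω)+1 : ℤ):ℝ) * dM f p ≤ ((2*(p-r+ω)+1 : ℤ):ℝ) * dM f r := by
      apply mul_le_mul_of_nonneg_left (le_of_lt hMp)
      exact_mod_cast (by omega : (0:ℤ) ≤ 2*(p-r+ω)+1)
    have hsuf : ((r+ω - (2*p - r + ω + 1) + 1 : ℤ):ℝ) * dM f r
        ≤ ∑ k ∈ Finset.Icc (2*p - r + ω + 1) (r+ω), f k := by
      have hco : ((r+ω - (2*p - r + ω + 1) + 1 : ℤ):ℝ)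
          = ((2*ω+1 : ℤ):ℝ) - ((2*(p-r+ω)+1 : ℤ):ℝ) := by push_cast; ring
      rw [hco]
      have : ∑ k ∈ Finset.Icc (2*p - r + ω + 1) (r+ω), f k
          = (∑ k ∈ Finset.Icc (r-ω) (r+ω), f k) - ∑ k ∈ Finset.Icc (r-ω) (2*p - r + ω), f k := by
        linarith [hsplit]
      rw [this, hsumI]
      nlinarith [hleft, hmul]
    obtain ⟨t, ht1, ht2, ht3⟩ :=
      exists_ge_of_sum f (2*p - r + ω + 1) (r+ω) (dM f r) hc1 hsuf
    have htq : q ≤ t := by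
      by_contra hcon
      push_neg at hcon
      have hpt : p < t := by omega
      have := hess t hpt hcon
      linarith
    exact ⟨t, ht2, htq, fun _ => ht1, ht3⟩
  · push_neg at hpc
    by_cases hqc : q ≤ r + ω
    · have hsplit := sum_Icc_split f (r-ω) (q-1) (r+ω) (by omega) (by omega)
      rw [show (q - 1 + 1 : ℤ) = q by ring] at hsplit
      have hmid : ∑ k ∈ Finset.Icc (r-ω) (q-1), f k
          ≤ ((q-1-(r-ω)+1 : ℤ):ℝ) * (dM f r - (1/4) * peakVar f p r q) := by
        apply sum_Icc_le f (r-ω) (q-1) _ (by omega)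
        intro k hk
        rw [Finset.mem_Icc] at hk
        exact hess k (by omega) (by omega)
      have hmid2 : ∑ k ∈ Finset.Icc (r-ω) (q-1), f k ≤ ((q-1-(r-ω)+1 : ℤ):ℝ) * dM f r := by
        refine hmid.trans ?_
        have hc0 : (0:ℝ) ≤ ((q-1-(r-ω)+1 : ℤ):ℝ) := by
          exact_mod_cast (by omega : (0:ℤ) ≤ q-1-(r-ω)+1)
        nlinarith
      have hsuf : ((r+ω - q + 1 : ℤ):ℝ) * dM f r ≤ ∑ k ∈ Finset.Icc q (r+ω), f k := by
        have hco : ((r+ω - q + 1 : ℤ):ℝ) = ((2*ω+1 : ℤ):ℝ) - ((q-1-(r-ω)+1 : ℤ):ℝ) := by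
          push_cast; ring
        rw [hco]
        have : ∑ k ∈ Finset.Icc q (r+ω), f k
            = (∑ k ∈ Finset.Icc (r-ω) (r+ω), f k) - ∑ k ∈ Finset.Icc (r-ω) (q-1), f k := by
          linarith [hsplit]
        rw [this, hsumI]
        nlinarith [hmid2]
      obtain ⟨t, ht1, ht2, ht3⟩ := exists_ge_of_sum f q (r+ω) (dM f r) hqc hsuf
      exact ⟨t, ht2, ht1, fun hcon => absurd hcon (by omega), ht3⟩
    · exfalso
      push_neg at hqc
      have hall : ∑ k ∈ Finset.Icc (r-ω) (r+ω), f k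
          ≤ ((r+ω-(r-ω)+1 : ℤ):ℝ) * (dM f r - (1/4) * peakVar f p r q) := by
        apply sum_Icc_le f (r-ω) (r+ω) _ hIab
        intro k hk
        rw [Finset.mem_Icc] at hk
        exact hess k (by omega) (by omega)
      rw [hsumI, show (r+ω-(r-ω)+1 : ℤ) = 2*ω+1 by ring] at hall
      have hc0 : (0:ℝ) < ((2*ω+1 : ℤ):ℝ) := by
        exact_mod_cast (by omega : (0:ℤ) < 2*ω+1)
      nlinarith


/-- the single-peak case of Lemma 2, with constant `1/4`. -/
theorem stmt4 (f : ℤ → ℝ) (hf : ∀ n, 0 ≤ f n) (hbv : BddVar f)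
    (L x y : ℤ) (hL : 0 < L) (hLeven : Even L) (hxy : y = x + L)
    (p r q ω : ℤ) (hpk : IsEssentialPeak f p r q) (hrad : IsRadius f r ω)
    (hxr : x ≤ r) (hry : r ≤ y) (hωlb : 32 * L < ω) (hωub : ω ≤ 64 * L) :
    ∃ s u v t : ℤ, s < u ∧ u < v ∧ v < t ∧
      x - 64 * L ≤ s ∧ t ≤ y + 64 * L ∧
      4 * L ≤ u - s ∧ v - u = L ∧ 4 * L ≤ t - v ∧
      min (f s) (f t) - avg f u v ≥ (1 / 4 : ℝ) * peakVar f p r q := by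
  have hpk' := hpk
  obtain ⟨⟨hpr, hrq, hMp, hMq⟩, hess⟩ := hpk'
  have hVdef : peakVar f p r q = 2 * dM f r - dM f p - dM f q := rfl
  have hVpos : 0 < peakVar f p r q := by linarith
  obtain ⟨s, hs1, hs2, hs3, hfs⟩ := exists_left f hf hbv p r q ω hpk hrad
  obtain ⟨t, ht1, ht2, ht3, hft⟩ := exists_right f hf hbv p r q ω hpk hrad
  obtain ⟨m, hm⟩ := hLeven
  have hm0 : 0 < m := by omega
  by_cases hwide : 9*L + 1 ≤ q - p
  · have hu1 : p+1 ≤ max (p+1) (s+4*L) := le_max_left _ _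
    have hu2 : s+4*L ≤ max (p+1) (s+4*L) := le_max_right _ _
    have hu3 : max (p+1) (s+4*L) ≤ p+4*L := max_le (by omega) (by omega)
    refine ⟨s, max (p+1) (s+4*L), max (p+1) (s+4*L) + L, t, by omega, by omega, by omega,
      by omega, by omega, by omega, by omega, by omega, ?_⟩
    have havgw : avg f (max (p+1) (s+4*L)) (max (p+1) (s+4*L) + L)
        ≤ dM f r - (1/4) * peakVar f p r q := by
      apply avg_le_of_le f _ _ _ (by omega)
      intro k hk
      rw [Finset.mem_Icc] at hk
      exact hess k (by omega) (by omega)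
    have hmin : dM f r ≤ min (f s) (f t) := le_min hfs hft
    linarith
  · push_neg at hwide
    have hq : q ≤ r + ω := by omega
    have hp : r - ω ≤ p := by omega
    have hs3' := hs3 hq
    have ht3' := ht3 hp
    by_cases hcmp : dM f p ≤ dM f q
    · refine ⟨s, p - m, p + m, t, by omega, by omega, by omega, by omega, by omega,
        by omega, by omega, by omega, ?_⟩
      have havgw : avg f (p-m) (p+m) ≤ dM f p := avg_le_dM f hf hbv p m (by omega)
      have hmin : dM f r ≤ min (f s) (f t) := le_min hfs hft
      linarith
    · push_neg at hcmp
      refine ⟨s, q - m, q + m, t, by omega, by omega, by omega, by omega, by omega,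
        by omega, by omega, by omega, ?_⟩
      have havgw : avg f (q-m) (q+m) ≤ dM f q := avg_le_dM f hf hbv q m (by omega)
      have hmin : dM f r ≤ min (f s) (f t) := le_min hfs hft
      linarith

end
end

section
/- Let f : ℤ → ℝ be nonnegative with bounded variation and fix integers a_1 < b_1 < a_2 < b_2 < … < a_σ < b_σ < a_{σ+1} with Mf(a_i) < Mf(b_i) and Mf(a_{i+1}) < Mf(b_i) for 1 ≤ i ≤ σ, giving peaks 𝕡_i = {a_i < b_i < a_{i+1}}. Then the sum of Var 𝕡_i over those indices i for which 𝕡_i is NOT an essential peak is at most 2·Var f. -/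
open Finset

noncomputable section

lemma fbound (f : ℤ → ℝ) (x : ℤ) : ∀ y : ℤ, x ≤ y →
    |f y - f x| ≤ ∑ k ∈ Finset.Ico x y, |f (k + 1) - f k| := by
  refine Int.le_induction ?_ ?_
  · simp
  · intro y hy ih
    have hins : Finset.Ico x (y + 1) = insert y (Finset.Ico x y) := by
      ext k; simp; omega
    rw [hins, Finset.sum_insert (by simp)]
    have h := abs_add_le (f y - f x) (f (y + 1) - f y)
    have he : f y - f x + (f (y + 1) - f y) = f (y + 1) - f x := by ring
    rw [he] at h
    linarith

lemma f_le_bound (f : ℤ → ℝ) (hbv : BddVar f) (n : ℤ) :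
    |f n| ≤ |f 0| + dVar f := by
  have h1 : |f n| - |f 0| ≤ |f n - f 0| := abs_sub_abs_le_abs_sub _ _
  have h2 : |f n - f 0| ≤ dVar f := by
    rcases le_total 0 n with h | h
    · exact (fbound f 0 n h).trans
        (Summable.sum_le_tsum _ (fun k _ => abs_nonneg _) hbv)
    · rw [abs_sub_comm]
      exact (fbound f n 0 h).trans
        (Summable.sum_le_tsum _ (fun k _ => abs_nonneg _) hbv)
  linarith

lemma avg_le (f : ℤ → ℝ) (hbv : BddVar f) (n : ℤ) (r : ℕ) :
    avg (fun k => |f k|) (n - r) (n + r) ≤ |f 0| + dVar f := by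
  set C := |f 0| + dVar f with hC
  have hC0 : 0 ≤ C := by
    have : 0 ≤ dVar f := tsum_nonneg (fun k => abs_nonneg _)
    have := abs_nonneg (f 0); linarith
  unfold avg
  have hden : ((n + r) - (n - r) + 1 : ℤ) = 2 * r + 1 := by ring
  rw [hden]
  have hcard : (Finset.Icc (n - r) (n + r)).card = 2 * r + 1 := by
    rw [Int.card_Icc]; omega
  have hsum : ∑ k ∈ Finset.Icc (n - (r:ℤ)) (n + r), |f k| ≤ ((2 * r + 1 : ℤ) : ℝ) * C := by
    calc ∑ k ∈ Finset.Icc (n - (r:ℤ)) (n + r), |f k|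
        ≤ ∑ _k ∈ Finset.Icc (n - (r:ℤ)) (n + r), C :=
          Finset.sum_le_sum (fun k _ => f_le_bound f hbv k)
      _ = ((2 * r + 1 : ℤ) : ℝ) * C := by
          rw [Finset.sum_const, hcard, nsmul_eq_mul]; push_cast; ring
  rw [div_le_iff₀ (by positivity)]
  simpa [mul_comm] using hsum

lemma le_dM (f : ℤ → ℝ) (hbv : BddVar f) (n : ℤ) : f n ≤ dM f n := by
  have hb : BddAbove (Set.range fun r : ℕ => avg (fun k => |f k|) (n - r) (n + r)) :=
    ⟨|f 0| + dVar f, by rintro x ⟨r, rfl⟩; exact avg_le f hbv n r⟩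
  have h0 : avg (fun k => |f k|) (n - (0:ℕ)) (n + (0:ℕ)) = |f n| := by
    simp [avg]
  calc f n ≤ |f n| := le_abs_self _
    _ = avg (fun k => |f k|) (n - (0:ℕ)) (n + (0:ℕ)) := h0.symm
    _ ≤ dM f n := le_ciSup hb 0

lemma a_mono (σ : ℕ) (a b : ℕ → ℤ)
    (hab : ∀ i ∈ Finset.Icc 1 σ, a i < b i ∧ b i < a (i + 1)) :
    ∀ i j, 1 ≤ i → i ≤ j → j ≤ σ + 1 → a i ≤ a j := by
  intro i j h1 hij hj
  induction j with
  | zero => omega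
  | succ j ih =>
    rcases Nat.eq_or_lt_of_le hij with h | h
    · rw [h]
    · have hij' : i ≤ j := by omega
      have h1' : a i ≤ a j := ih hij' (by omega)
      have hj' : j ∈ Finset.Icc 1 σ := by simp; omega
      have := hab j hj'
      linarith [this.1, this.2]

open scoped Classical

/-- Lemma 3 of the paper, the variation of the non-essential peaks of
the system is at most `2·Var f`. -/
theorem stmt8 (f : ℤ → ℝ) (hf : ∀ n, 0 ≤ f n) (hbv : BddVar f)
    (σ : ℕ) (a b : ℕ → ℤ)
    (hab : ∀ i ∈ Finset.Icc 1 σ, a i < b i ∧ b i < a (i + 1))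
    (hM : ∀ i ∈ Finset.Icc 1 σ,
      dM f (a i) < dM f (b i) ∧ dM f (a (i + 1)) < dM f (b i)) :
    ∑ i ∈ (Finset.Icc 1 σ).filter
        (fun i => ¬ IsEssentialPeak f (a i) (b i) (a (i + 1))),
      peakVar f (a i) (b i) (a (i + 1)) ≤ 2 * dVar f := by
  classical
  set S := (Finset.Icc 1 σ).filter
    (fun i => ¬ IsEssentialPeak f (a i) (b i) (a (i + 1))) with hSdef
  have key : ∀ i ∈ S, peakVar f (a i) (b i) (a (i + 1)) ≤
      2 * ∑ k ∈ Finset.Ico (a i) (a (i + 1)), |f (k + 1) - f k| := by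
    intro i hi
    rw [hSdef, Finset.mem_filter] at hi
    obtain ⟨hi1, hi2⟩ := hi
    obtain ⟨h1, h2⟩ := hab i hi1
    obtain ⟨h3, h4⟩ := hM i hi1
    have hpeak : IsPeak f (a i) (b i) (a (i + 1)) := ⟨h1, h2, h3, h4⟩
    rw [IsEssentialPeak] at hi2
    push_neg at hi2
    obtain ⟨k, hk1, hk2, hk3⟩ := hi2 hpeak
    have hfa : f (a i) ≤ dM f (a i) := le_dM f hbv (a i)
    have hfa' : f (a (i + 1)) ≤ dM f (a (i + 1)) := le_dM f hbv (a (i + 1))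
    have hv1 : f k - f (a i) ≤ ∑ j ∈ Finset.Ico (a i) k, |f (j + 1) - f j| := by
      have h := fbound f (a i) k hk1.le
      have h2 := le_abs_self (f k - f (a i))
      linarith
    have hv2 : f k - f (a (i + 1)) ≤ ∑ j ∈ Finset.Ico k (a (i + 1)), |f (j + 1) - f j| := by
      have h := fbound f k (a (i + 1)) hk2.le
      have h2 := neg_le_abs (f (a (i + 1)) - f k)
      linarith
    have hsplit : ∑ j ∈ Finset.Ico (a i) k, |f (j + 1) - f j|
        + ∑ j ∈ Finset.Ico k (a (i + 1)), |f (j + 1) - f j|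
        = ∑ j ∈ Finset.Ico (a i) (a (i + 1)), |f (j + 1) - f j| :=
      by rw [← Finset.sum_union (Finset.Ico_disjoint_Ico_consecutive (a i) k (a (i + 1))),
             Finset.Ico_union_Ico_eq_Ico hk1.le hk2.le]
    have hpv : peakVar f (a i) (b i) (a (i + 1))
        = 2 * dM f (b i) - dM f (a i) - dM f (a (i + 1)) := rfl
    rw [hpv] at hk3 ⊢
    linarith
  have hsum2 : ∑ i ∈ S, ∑ k ∈ Finset.Ico (a i) (a (i + 1)), |f (k + 1) - f k|
      ≤ dVar f := by
    have hdisj : (S : Set ℕ).PairwiseDisjoint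
        (fun i => Finset.Ico (a i) (a (i + 1))) := by
      intro i hi j hj hij
      simp only [Finset.mem_coe, hSdef, Finset.mem_filter, Finset.mem_Icc] at hi hj
      have hgen : ∀ p q : ℕ, 1 ≤ p → p ≤ σ → 1 ≤ q → q ≤ σ → p < q →
          Disjoint (Finset.Ico (a p) (a (p + 1))) (Finset.Ico (a q) (a (q + 1))) := by
        intro p q hp1 hp2 hq1 hq2 hpq
        have := a_mono σ a b hab (p + 1) q (by omega) (by omega) (by omega)
        rw [Finset.disjoint_left]
        intro x hx hx'
        simp only [Finset.mem_Ico] at hx hx'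
        omega
      rcases lt_or_gt_of_ne hij with h | h
      · exact hgen i j hi.1.1 hi.1.2 hj.1.1 hj.1.2 h
      · exact (hgen j i hj.1.1 hj.1.2 hi.1.1 hi.1.2 h).symm
    rw [← Finset.sum_biUnion hdisj]
    exact Summable.sum_le_tsum _ (fun k _ => abs_nonneg _) hbv
  calc ∑ i ∈ S, peakVar f (a i) (b i) (a (i + 1))
      ≤ ∑ i ∈ S, 2 * ∑ k ∈ Finset.Ico (a i) (a (i + 1)), |f (k + 1) - f k| :=
        Finset.sum_le_sum key
    _ = 2 * ∑ i ∈ S, ∑ k ∈ Finset.Ico (a i) (a (i + 1)), |f (k + 1) - f k| := by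
        rw [Finset.mul_sum]
    _ ≤ 2 * dVar f := by linarith

end
end
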